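/- arXiv:1512.02714 — 6 statements merged into one kernel-verified Lean document; each statement's English description precedes it below -/
import Mathlib

section
/- For a walk W = v_0, v_1, …, v_k on an uncertain graph 𝒢, the walk probability factorizes over the distinct vertices of W: Pr_𝒢(X_1 = v_1, …, X_k = v_k | X_0 = v_0) = ∏_{v ∈ V(W)} α_W(v), where α_W(v) = Σ_{G : O_W(v) ⊆ O_G(v)} Pr(𝒢 ⇒ G) · inv(|O_G(v)|)^{c_W(v)}. -/
variable {V : Type*} [DecidableEq V]
variable {V : Type*} [DecidableEq V]

/-- The out-neighborhood of `u` in the possible world with edge set `G`. -/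
def outN (G : Finset (V × V)) (u : V) : Finset V :=
  (G.filter (fun e => e.1 = u)).image Prod.snd

/-- One-step transition probability of the random walk on the deterministic
graph with edge set `G`. -/
noncomputable def stepPr (G : Finset (V × V)) (u v : V) : ℝ :=
  if (u, v) ∈ G then 1 / (outN G u).card else 0

/-- Probability that the random walk on `G` started at `vs 0` visits
`vs 1, …, vs k` at times `1, …, k`. -/
noncomputable def walkPr (G : Finset (V × V)) (vs : ℕ → V) (k : ℕ) : ℝ :=
  ∏ i ∈ Finset.range k, stepPr G (vs i) (vs (i + 1))

/-- Probability `Pr(𝒢 ⇒ G)` of the possible world `G` of the uncertain graph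
with edge set `E` and edge probabilities `P`. -/
noncomputable def worldPr (E : Finset (V × V)) (P : V × V → ℝ)
    (G : Finset (V × V)) : ℝ :=
  (∏ e ∈ G, P e) * ∏ e ∈ E \ G, (1 - P e)

/-- The set of distinct vertices of the walk `vs 0, …, vs k`. -/
def VW (vs : ℕ → V) (k : ℕ) : Finset V := (Finset.range (k + 1)).image vs

/-- The set `O_W(v)` of out-neighbors of `v` used by the walk. -/
def OW (vs : ℕ → V) (k : ℕ) (v : V) : Finset V :=
  ((Finset.range k).filter (fun i => vs i = v)).image (fun i => vs (i + 1))

/-- The number `c_W(v)` of transitions of the walk leaving `v`. -/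
def cW (vs : ℕ → V) (k : ℕ) (v : V) : ℕ :=
  ((Finset.range k).filter (fun i => vs i = v)).card

/-- `inv x = 1/x` for `x ≠ 0`, and `inv 0 = 1`. -/
noncomputable def invR (x : ℕ) : ℝ := if x = 0 then 1 else 1 / x

/-- The factor `α_W(v)`: expectation of `inv(|O_G(v)|)^{c_W(v)}` over the
possible worlds `G` containing all arcs from `v` used by the walk. -/
noncomputable def alphaW (E : Finset (V × V)) (P : V × V → ℝ)
    (vs : ℕ → V) (k : ℕ) (v : V) : ℝ :=
  ∑ G ∈ E.powerset.filter (fun G => OW vs k v ⊆ outN G v),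
    worldPr E P G * (invR (outN G v).card) ^ (cW vs k v)

/-!
The random walk on a fixed world `G` multiplies, for each visit to `v`, the factor
`1 / |O_G(v)|` or `0`, so grouping the steps by their source vertex writes the walk
probability as `∏_{v ∈ V(W)} f_v(G)` with `f_v(G) = [O_W(v) ⊆ O_G(v)] inv(|O_G(v)|)^{c_W(v)}`.
Each `f_v` depends only on the arcs of `G` leaving `v`, and these sets of arcs are
independent under the product measure on worlds, so the expectation of the product
is the product of the expectations `α_W(v)`.
-/

open Finset

theorem sum_worldPr (E : Finset (V × V)) (P : V × V → ℝ) :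
    ∑ G ∈ E.powerset, worldPr E P G = 1 := by
  simp [worldPr, ← prod_add]

theorem worldPr_eq_mul_filter (E G : Finset (V × V)) (P : V × V → ℝ)
    (p : V × V → Prop) [DecidablePred p] :
    worldPr E P G =
      worldPr (E.filter p) P (G.filter p) * worldPr (E.filter (¬p ·)) P (G.filter (¬p ·)) := by
  have sdiff_filter : ∀ (q : V × V → Prop) [DecidablePred q],
      E.filter q \ G.filter q = (E \ G).filter q := fun q _ => by ext; grind
  simp only [worldPr, sdiff_filter, ← prod_filter_mul_prod_filter_not G p,
    ← prod_filter_mul_prod_filter_not (E \ G) p]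
  ring

theorem sum_worldPr_mul_filter_mul (E : Finset (V × V)) (P : V × V → ℝ)
    (p : V × V → Prop) [DecidablePred p] (f g : Finset (V × V) → ℝ) :
    ∑ G ∈ E.powerset, worldPr E P G * (f (G.filter p) * g (G.filter (¬p ·))) =
      (∑ A ∈ (E.filter p).powerset, worldPr (E.filter p) P A * f A) *
        ∑ B ∈ (E.filter (¬p ·)).powerset, worldPr (E.filter (¬p ·)) P B * g B := by
  rw [sum_mul_sum, ← sum_product']
  refine sum_nbij' (fun G => (G.filter p, G.filter (¬p ·))) (fun AB => AB.1 ∪ AB.2)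
    ?_ ?_ ?_ ?_ ?_
  · intro G hG
    simp only [mem_product, mem_powerset] at hG ⊢
    exact ⟨filter_subset_filter p hG, filter_subset_filter _ hG⟩
  · intro AB hAB
    simp only [mem_product, mem_powerset] at hAB ⊢
    exact union_subset (hAB.1.trans (filter_subset _ _)) (hAB.2.trans (filter_subset _ _))
  · intro G _
    exact filter_union_filter_not_eq p G
  · rintro ⟨A, B⟩ hAB
    simp only [mem_product, mem_powerset, subset_iff, mem_filter] at hAB
    refine Prod.ext ?_ ?_ <;> ext e <;> grind
  · intro G _
    rw [worldPr_eq_mul_filter E G P p]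
    ring

theorem sum_worldPr_mul_filter (E : Finset (V × V)) (P : V × V → ℝ)
    (p : V × V → Prop) [DecidablePred p] (f : Finset (V × V) → ℝ) :
    ∑ G ∈ E.powerset, worldPr E P G * f (G.filter p) =
      ∑ A ∈ (E.filter p).powerset, worldPr (E.filter p) P A * f A := by
  simpa [sum_worldPr] using sum_worldPr_mul_filter_mul E P p f 1

theorem sum_worldPr_mul_prod_fiber {ι : Type*} [DecidableEq ι] (E : Finset (V × V))
    (P : V × V → ℝ) (κ : V × V → ι) (T : Finset ι) (g : ι → Finset (V × V) → ℝ) :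
    ∑ G ∈ E.powerset, worldPr E P G * ∏ i ∈ T, g i (G.filter (κ · = i)) =
      ∏ i ∈ T, ∑ G ∈ E.powerset, worldPr E P G * g i (G.filter (κ · = i)) := by
  induction T using Finset.induction_on generalizing E with
  | empty => simp [sum_worldPr]
  | @insert j T hj ih =>
    have fiber_of_ne : ∀ i ∈ T, ∀ G : Finset (V × V),
        G.filter (κ · = i) = (G.filter (¬κ · = j)).filter (κ · = i) := by
      intro i hi G
      rw [filter_filter]
      exact filter_congr fun e _ => by grind
    have marginal : ∀ i ∈ T, ∑ G ∈ E.powerset, worldPr E P G * g i (G.filter (κ · = i)) =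
        ∑ B ∈ (E.filter (¬κ · = j)).powerset,
          worldPr (E.filter (¬κ · = j)) P B * g i (B.filter (κ · = i)) := by
      intro i hi
      rw [← sum_worldPr_mul_filter E P _ (fun B => g i (B.filter (κ · = i)))]
      exact sum_congr rfl fun G _ => by rw [← fiber_of_ne i hi G]
    calc ∑ G ∈ E.powerset, worldPr E P G * ∏ i ∈ insert j T, g i (G.filter (κ · = i))
        = ∑ G ∈ E.powerset, worldPr E P G * (g j (G.filter (κ · = j)) *
            ∏ i ∈ T, g i ((G.filter (¬κ · = j)).filter (κ · = i))) := by
          refine sum_congr rfl fun G _ => ?_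
          rw [prod_insert hj, prod_congr rfl fun i hi => congrArg (g i) (fiber_of_ne i hi G)]
      _ = (∑ G ∈ E.powerset, worldPr E P G * g j (G.filter (κ · = j))) *
            ∏ i ∈ T, ∑ G ∈ E.powerset, worldPr E P G * g i (G.filter (κ · = i)) := by
          rw [sum_worldPr_mul_filter_mul E P (κ · = j) (g j)
              (fun B => ∏ i ∈ T, g i (B.filter (κ · = i))), sum_worldPr_mul_filter, ih,
            prod_congr rfl marginal]
      _ = _ := by rw [prod_insert hj]

theorem mem_outN {G : Finset (V × V)} {u w : V} : w ∈ outN G u ↔ (u, w) ∈ G := by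
  simp [outN]

theorem outN_filter_fst (G : Finset (V × V)) (v : V) :
    outN (G.filter (·.1 = v)) v = outN G v := by
  simp only [outN, filter_filter, and_self]

noncomputable def vertexFactor (vs : ℕ → V) (k : ℕ) (v : V) (G : Finset (V × V)) : ℝ :=
  if OW vs k v ⊆ outN G v then invR (outN G v).card ^ cW vs k v else 0

theorem vertexFactor_filter_fst (vs : ℕ → V) (k : ℕ) (v : V) (G : Finset (V × V)) :
    vertexFactor vs k v (G.filter (·.1 = v)) = vertexFactor vs k v G := by
  simp only [vertexFactor, outN_filter_fst]

theorem prod_stepPr_eq_vertexFactor (G : Finset (V × V)) (vs : ℕ → V) (k : ℕ) (v : V) :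
    ∏ i ∈ (range k).filter (vs · = v), stepPr G (vs i) (vs (i + 1)) = vertexFactor vs k v G := by
  have step : ∀ i ∈ (range k).filter (vs · = v), stepPr G (vs i) (vs (i + 1)) =
      if vs (i + 1) ∈ outN G v then 1 / ((outN G v).card : ℝ) else 0 := by
    intro i hi
    simp only [stepPr, (mem_filter.mp hi).2, mem_outN]
  rw [prod_congr rfl step, prod_ite_zero, prod_const]
  simp only [vertexFactor, OW, image_subset_iff, cW]
  split_ifs with hsub
  · rcases eq_empty_or_nonempty ((range k).filter (vs · = v)) with hempty | ⟨i, hi⟩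
    · simp [hempty]
    · rw [invR, if_neg (card_ne_zero_of_mem (hsub i hi))]
  · rfl

theorem walkPr_eq_prod_vertexFactor (G : Finset (V × V)) (vs : ℕ → V) (k : ℕ) :
    walkPr G vs k = ∏ v ∈ VW vs k, vertexFactor vs k v (G.filter (·.1 = v)) := by
  have maps_to : ∀ i ∈ range k, vs i ∈ VW vs k := fun i hi =>
    mem_image_of_mem vs (mem_range.mpr (Nat.lt_succ_of_lt (mem_range.mp hi)))
  rw [walkPr, ← prod_fiberwise_of_maps_to maps_to]
  simp only [prod_stepPr_eq_vertexFactor, vertexFactor_filter_fst]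

theorem alphaW_eq_sum_worldPr_mul (E : Finset (V × V)) (P : V × V → ℝ) (vs : ℕ → V) (k : ℕ)
    (v : V) :
    alphaW E P vs k v =
      ∑ G ∈ E.powerset, worldPr E P G * vertexFactor vs k v (G.filter (·.1 = v)) := by
  rw [alphaW, sum_filter]
  refine sum_congr rfl fun G _ => ?_
  rw [vertexFactor_filter_fst, vertexFactor, mul_ite, mul_zero]

theorem walkPr_eq_prod_alpha_general (E : Finset (V × V)) (P : V × V → ℝ)
    (vs : ℕ → V) (k : ℕ) :
    ∑ G ∈ E.powerset, worldPr E P G * walkPr G vs k =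
    ∏ v ∈ VW vs k, alphaW E P vs k v := by
  simp only [walkPr_eq_prod_vertexFactor, alphaW_eq_sum_worldPr_mul]
  exact sum_worldPr_mul_prod_fiber E P Prod.fst (VW vs k) (vertexFactor vs k)

/-- the walk probability on an uncertain graph factorizes over
the distinct vertices of the walk:
`Pr_𝒢(X_1 = v_1, …, X_k = v_k | X_0 = v_0) = ∏_{v ∈ V(W)} α_W(v)`. -/
theorem walkPr_eq_prod_alpha (E : Finset (V × V)) (P : V × V → ℝ)
    (hP : ∀ e ∈ E, 0 < P e ∧ P e ≤ 1)
    (vs : ℕ → V) (k : ℕ)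
    (hwalk : ∀ i < k, (vs i, vs (i + 1)) ∈ E) :
    ∑ G ∈ E.powerset, worldPr E P G * walkPr G vs k =
    ∏ v ∈ VW vs k, alphaW E P vs k v :=
  walkPr_eq_prod_alpha_general E P vs k
end

section
/- For every vertex v in a walk W on uncertain graph 𝒢, α_W(v) = (∏_{w ∈ O_W(v)} P_𝒢((v,w))) · Σ_{x=0}^{n} r(n, x) · inv(x + |O_W(v)|)^{c_W(v)}, where {w_1, …, w_n} = O_𝒢(v) \ O_W(v) and r(n, x) is the probability that exactly x of the arcs (v, w_1), …, (v, w_n) exist. -/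
variable {V : Type*} [DecidableEq V]
variable {V : Type*} [DecidableEq V]

/-- `rD P v D x`: the probability that exactly `x` of the arcs from `v` to
the vertices of `D` exist (Poisson-binomial distribution). -/
noncomputable def rD (P : V × V → ℝ) (v : V) (D : Finset V) (x : ℕ) : ℝ :=
  ∑ S ∈ D.powerset.filter (fun S => S.card = x),
    (∏ w ∈ S, P (v, w)) * ∏ w ∈ D \ S, (1 - P (v, w))

/-!
Arcs exist independently, so a possible world is a random subset of `E`, and the summand of
`α_W(v)` depends only on the arcs leaving `v`: summing out all other arcs leaves a random subset
`T` of `O_𝒢(v)`. The constraint `O_W(v) ⊆ T` forces the arcs into `O_W(v)`, which contributes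
`∏_{w ∈ O_W(v)} P(v,w)`, and `T \ O_W(v)` is a random subset of `O_𝒢(v) \ O_W(v)` whose size
has the Poisson-binomial law `r(n, ·)`; grouping by that size gives the formula.
-/

open Finset

section RandomSubset

variable {α β : Type*} [DecidableEq α] [DecidableEq β]

/-- The probability that the random subset of `s` containing each `a` independently with
probability `p a` equals `t`. -/
noncomputable def randomSubsetProb (s : Finset α) (p : α → ℝ) (t : Finset α) : ℝ :=
  (∏ a ∈ t, p a) * ∏ a ∈ s \ t, (1 - p a)

lemma randomSubsetProb_insert_of_notMem {s t : Finset α} {a : α} (ha : a ∉ s) (ht : t ⊆ s)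
    (p : α → ℝ) :
    randomSubsetProb (insert a s) p t = (1 - p a) * randomSubsetProb s p t := by
  have hat : a ∉ t := fun h => ha (ht h)
  rw [randomSubsetProb, randomSubsetProb, insert_sdiff_of_notMem _ hat,
    prod_insert (fun h => ha (mem_sdiff.1 h).1)]
  ring

lemma randomSubsetProb_insert_insert {s t : Finset α} {a : α} (ha : a ∉ s) (ht : t ⊆ s)
    (p : α → ℝ) :
    randomSubsetProb (insert a s) p (insert a t) = p a * randomSubsetProb s p t := by
  rw [randomSubsetProb, randomSubsetProb, insert_sdiff_insert, sdiff_insert_of_notMem ha,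
    prod_insert (fun h => ha (ht h))]
  ring

lemma sum_powerset_insert_randomSubsetProb {s : Finset α} {a : α} (ha : a ∉ s) (p : α → ℝ)
    (f : Finset α → ℝ) :
    ∑ t ∈ (insert a s).powerset, randomSubsetProb (insert a s) p t * f t =
      (1 - p a) * ∑ t ∈ s.powerset, randomSubsetProb s p t * f t +
        p a * ∑ t ∈ s.powerset, randomSubsetProb s p t * f (insert a t) := by
  rw [sum_powerset_insert ha, mul_sum, mul_sum]
  congr 1 <;> refine sum_congr rfl fun t ht => ?_
  · rw [randomSubsetProb_insert_of_notMem ha (mem_powerset.1 ht), mul_assoc]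
  · rw [randomSubsetProb_insert_insert ha (mem_powerset.1 ht), mul_assoc]

lemma sum_randomSubsetProb_mul_filter (s : Finset α) (p : α → ℝ) (q : α → Prop)
    [DecidablePred q] (f : Finset α → ℝ) :
    ∑ t ∈ s.powerset, randomSubsetProb s p t * f (t.filter q) =
      ∑ t ∈ (s.filter q).powerset, randomSubsetProb (s.filter q) p t * f t := by
  induction s using Finset.induction_on generalizing f with
  | empty => simp
  | insert a s ha ih =>
    by_cases hqa : q a
    · have ha' : a ∉ s.filter q := fun h => ha (mem_of_mem_filter a h)
      simp only [sum_powerset_insert_randomSubsetProb ha, filter_insert, hqa, if_true,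
        sum_powerset_insert_randomSubsetProb ha']
      rw [ih, ih (fun t => f (insert a t))]
    · simp only [sum_powerset_insert_randomSubsetProb ha, filter_insert, hqa, if_false, ih]
      ring

lemma randomSubsetProb_image {f : α → β} (hf : Function.Injective f) (s t : Finset α)
    (p : β → ℝ) :
    randomSubsetProb (s.image f) p (t.image f) = randomSubsetProb s (p ∘ f) t := by
  rw [randomSubsetProb, randomSubsetProb, ← image_sdiff _ _ hf, prod_image hf.injOn,
    prod_image hf.injOn]
  rfl

lemma sum_powerset_image_randomSubsetProb {f : α → β} (hf : Function.Injective f)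
    (s : Finset α) (p : β → ℝ) (g : Finset β → ℝ) :
    ∑ t ∈ (s.image f).powerset, randomSubsetProb (s.image f) p t * g t =
      ∑ t ∈ s.powerset, randomSubsetProb s (p ∘ f) t * g (t.image f) := by
  rw [powerset_image, sum_image (image_injOn_powerset_of_injOn hf.injOn)]
  exact sum_congr rfl fun t _ => by rw [randomSubsetProb_image hf]

lemma sum_Icc_randomSubsetProb {O N : Finset α} (hON : O ⊆ N) (p : α → ℝ)
    (g : Finset α → ℝ) :
    ∑ t ∈ Icc O N, randomSubsetProb N p t * g t =
      (∏ a ∈ O, p a) * ∑ t ∈ (N \ O).powerset, randomSubsetProb (N \ O) p t * g (O ∪ t) := by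
  have hdisj {t : Finset α} (ht : t ∈ (N \ O).powerset) : Disjoint O t :=
    disjoint_sdiff.mono_right (mem_powerset.1 ht)
  rw [Icc_eq_image_powerset hON, sum_image, mul_sum]
  · refine sum_congr rfl fun t ht => ?_
    rw [randomSubsetProb, randomSubsetProb, prod_union (hdisj ht), sdiff_sdiff_left, sup_eq_union]
    ring
  · intro t ht u hu htu
    rw [← union_sdiff_cancel_left (hdisj ht), ← union_sdiff_cancel_left (hdisj hu)]
    exact congrArg (· \ O) htu

lemma sum_powerset_randomSubsetProb_mul_card (D : Finset α) (p : α → ℝ) (g : ℕ → ℝ) :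
    ∑ t ∈ D.powerset, randomSubsetProb D p t * g #t =
      ∑ x ∈ range (#D + 1), (∑ t ∈ powersetCard x D, randomSubsetProb D p t) * g x := by
  rw [sum_powerset]
  refine sum_congr rfl fun x _ => ?_
  rw [sum_mul]
  exact sum_congr rfl fun t ht => by rw [(mem_powersetCard.1 ht).2]

end RandomSubset

lemma worldPr_eq_randomSubsetProb (E : Finset (V × V)) (P : V × V → ℝ) (G : Finset (V × V)) :
    worldPr E P G = randomSubsetProb E P G := rfl

lemma rD_eq_sum_powersetCard (P : V × V → ℝ) (v : V) (D : Finset V) (x : ℕ) :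
    rD P v D x = ∑ t ∈ powersetCard x D, randomSubsetProb D (fun w => P (v, w)) t := by
  rw [rD, powersetCard_eq_filter]
  rfl

lemma filter_fst_eq_image_outN (E : Finset (V × V)) (v : V) :
    E.filter (fun e => e.1 = v) = (outN E v).image (Prod.mk v) := by
  ext ⟨a, b⟩
  simp only [outN, mem_filter, mem_image, Prod.exists, exists_eq_right, Prod.mk.injEq]
  constructor
  · rintro ⟨h, rfl⟩
    exact ⟨b, h, rfl, rfl⟩
  · rintro ⟨_, h, rfl, rfl⟩
    exact ⟨h, rfl⟩

lemma OW_subset_outN {E : Finset (V × V)} {vs : ℕ → V} {k : ℕ}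
    (hwalk : ∀ i < k, (vs i, vs (i + 1)) ∈ E) (v : V) : OW vs k v ⊆ outN E v := by
  intro w hw
  simp only [OW, mem_image, mem_filter, mem_range] at hw
  obtain ⟨i, ⟨hik, rfl⟩, rfl⟩ := hw
  exact mem_image.2 ⟨_, mem_filter.2 ⟨hwalk i hik, rfl⟩, rfl⟩

theorem alphaW_eq_poisson_binomial_general (E : Finset (V × V)) (P : V × V → ℝ)
    (vs : ℕ → V) (k : ℕ)
    (hwalk : ∀ i < k, (vs i, vs (i + 1)) ∈ E)
    (v : V) :
    alphaW E P vs k v =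
      (∏ w ∈ OW vs k v, P (v, w)) *
        ∑ x ∈ Finset.range ((outN E v \ OW vs k v).card + 1),
          rD P v (outN E v \ OW vs k v) x *
            invR (x + (OW vs k v).card) ^ (cW vs k v) := by
  set O := OW vs k v
  set N := outN E v
  set c := cW vs k v
  set g : Finset V → ℝ := fun T => if O ⊆ T then invR #T ^ c else 0
  calc alphaW E P vs k v
      = ∑ G ∈ E.powerset, randomSubsetProb E P G *
          g ((G.filter (fun e => e.1 = v)).image Prod.snd) := by
        rw [alphaW, sum_filter]
        simp only [worldPr_eq_randomSubsetProb, g, mul_ite, mul_zero]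
        rfl
    _ = ∑ T ∈ N.powerset, randomSubsetProb N (fun w => P (v, w)) T * g T := by
        rw [sum_randomSubsetProb_mul_filter E P (fun e => e.1 = v) (fun H => g (H.image Prod.snd)),
          filter_fst_eq_image_outN,
          sum_powerset_image_randomSubsetProb (Prod.mk_right_injective v)]
        simp only [image_image, Function.comp_def, image_id']
        rfl
    _ = ∑ T ∈ Icc O N, randomSubsetProb N (fun w => P (v, w)) T * invR #T ^ c := by
        rw [Icc_eq_filter_powerset, sum_filter]
        simp only [g, mul_ite, mul_zero]
    _ = (∏ w ∈ O, P (v, w)) * ∑ T ∈ (N \ O).powerset,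
          randomSubsetProb (N \ O) (fun w => P (v, w)) T * invR (#T + #O) ^ c := by
        rw [sum_Icc_randomSubsetProb (OW_subset_outN hwalk v)]
        refine congrArg _ (sum_congr rfl fun t ht => ?_)
        rw [card_union_of_disjoint (disjoint_sdiff.mono_right (mem_powerset.1 ht)), add_comm]
    _ = _ := by
        rw [sum_powerset_randomSubsetProb_mul_card (N \ O) _ (fun n => invR (n + #O) ^ c)]
        simp only [rD_eq_sum_powersetCard]

/-- closed formula for `α_W(v)` via the Poisson-binomial
distribution of the number of existing arcs from `v` to
`O_𝒢(v) \ O_W(v)`. -/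
theorem alphaW_eq_poisson_binomial (E : Finset (V × V)) (P : V × V → ℝ)
    (hP : ∀ e ∈ E, 0 < P e ∧ P e ≤ 1)
    (vs : ℕ → V) (k : ℕ)
    (hwalk : ∀ i < k, (vs i, vs (i + 1)) ∈ E)
    (v : V) (hv : v ∈ VW vs k) :
    alphaW E P vs k v =
      (∏ w ∈ OW vs k v, P (v, w)) *
        ∑ x ∈ Finset.range ((outN E v \ OW vs k v).card + 1),
          rD P v (outN E v \ OW vs k v) x *
            invR (x + (OW vs k v).card) ^ (cW vs k v) :=
  alphaW_eq_poisson_binomial_general E P vs k hwalk v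
end

section
/- For a deterministic directed graph, the n-th iterative SimRank matrix S^(n), defined by S^(0) = I and S^(n) = c·Aᵀ·S^(n−1)·A + (1−c)·I, satisfies the closed form S^(n) = c^n·(W^(n))ᵀ·W^(n) + (1−c)·Σ_{k=0}^{n−1} c^k·(W^(k))ᵀ·W^(k), where W^(k) = A^k and W^(0) = I. -/
/-!
The SimRank iteration is an affine recurrence driven by the linear map `X ↦ Aᵀ * X * A`, whose
`k`-th iterate is `X ↦ (Aᵏ)ᵀ * X * Aᵏ`; unrolling the recurrence gives the closed form.
-/

open Matrix

theorem LinearMap.eq_smul_pow_apply_add_sum_of_succ_eq {R M : Type*} [CommSemiring R]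
    [AddCommMonoid M] [Module R M] (T : M →ₗ[R] M) (c : R) (b : M) (x : ℕ → M)
    (hx : ∀ m, x (m + 1) = c • T (x m) + b) (n : ℕ) :
    x n = c ^ n • (T ^ n) (x 0) + ∑ k ∈ Finset.range n, c ^ k • (T ^ k) b := by
  induction n with
  | zero => simp
  | succ n ih =>
    rw [hx, ih, Finset.sum_range_succ', map_add, map_smul, map_sum, smul_add, Finset.smul_sum]
    simp only [map_smul, smul_smul, ← pow_succ', Module.End.pow_apply,
      Function.iterate_succ_apply', pow_zero, Module.End.one_apply, one_smul, add_assoc]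

namespace Matrix

variable {ι R : Type*} [Fintype ι] [DecidableEq ι] [CommSemiring R]

def transposeCongr (A : Matrix ι ι R) : Matrix ι ι R →ₗ[R] Matrix ι ι R :=
  LinearMap.mulLeft R Aᵀ ∘ₗ LinearMap.mulRight R A

@[simp]
theorem transposeCongr_apply (A X : Matrix ι ι R) : transposeCongr A X = Aᵀ * X * A := by
  simp [transposeCongr, Matrix.mul_assoc]

theorem transposeCongr_pow_apply (A X : Matrix ι ι R) (k : ℕ) :
    (transposeCongr A ^ k) X = (A ^ k)ᵀ * X * A ^ k := by
  induction k with
  | zero => simp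
  | succ k ih =>
    rw [pow_succ', Module.End.mul_apply, ih, transposeCongr_apply, pow_succ, transpose_mul]
    simp only [Matrix.mul_assoc]

end Matrix

theorem simrank_closed_form_general {d : ℕ} (A : Matrix (Fin d) (Fin d) ℝ)
    (c : ℝ)
    (S : ℕ → Matrix (Fin d) (Fin d) ℝ)
    (hS0 : S 0 = 1)
    (hSrec : ∀ m, S (m + 1) = c • (Aᵀ * S m * A) + (1 - c) • 1)
    (n : ℕ) :
    S n = c ^ n • ((A ^ n)ᵀ * A ^ n) +
      (1 - c) • ∑ k ∈ Finset.range n, c ^ k • ((A ^ k)ᵀ * A ^ k) := by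
  have hrec : ∀ m, S (m + 1) = c • transposeCongr A (S m) + (1 - c) • 1 := by
    simpa only [transposeCongr_apply] using hSrec
  rw [(transposeCongr A).eq_smul_pow_apply_add_sum_of_succ_eq c _ S hrec n, hS0,
    Finset.smul_sum]
  simp only [map_smul, transposeCongr_pow_apply, Matrix.mul_one, smul_comm (1 - c)]

/-- closed form of the iterative SimRank matrices.  If
`S 0 = I` and `S (m+1) = c • Aᵀ S m A + (1-c) • I`, then
`S n = c^n • (Aⁿ)ᵀ Aⁿ + (1-c) • Σ_{k<n} c^k • (Aᵏ)ᵀ Aᵏ`. -/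
theorem simrank_closed_form {d : ℕ} (A : Matrix (Fin d) (Fin d) ℝ)
    (c : ℝ) (hc0 : 0 < c) (hc1 : c < 1)
    (S : ℕ → Matrix (Fin d) (Fin d) ℝ)
    (hS0 : S 0 = 1)
    (hSrec : ∀ m, S (m + 1) = c • (Aᵀ * S m * A) + (1 - c) • 1)
    (n : ℕ) :
    S n = c ^ n • ((A ^ n)ᵀ * A ^ n) +
      (1 - c) • ∑ k ∈ Finset.range n, c ^ k • ((A ^ k)ᵀ * A ^ k) :=
  simrank_closed_form_general A c S hS0 hSrec n
end

section
/- The sequence of iterative SimRank matrices S^(n) with S^(0) = I and S^(n) = c·Aᵀ·S^(n−1)·A + (1−c)·I converges entrywise as n → ∞, provided every entry of (A^k)ᵀ A^k is bounded by 1 (e.g., when A is column-stochastic or column-substochastic); moreover the limit S satisfies S = c·Aᵀ·S·A + (1−c)·I. -/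
open Matrix Filter

/-! Unrolling the recursion gives
`S n = cⁿ • (Aⁿ)ᵀAⁿ + (1 - c) • ∑_{k<n} cᵏ • (Aᵏ)ᵀAᵏ`.
As the entries of `(Aᵏ)ᵀAᵏ` are bounded by `1`, the first term tends to `0` and the series
converges entrywise by comparison with the geometric series. The limit satisfies the fixed-point
equation because the right-hand side of the recursion is continuous in `S n`. -/

namespace Matrix

variable {n R : Type*} [Fintype n] [DecidableEq n] [CommRing R]

def gramPow (A : Matrix n n R) (k : ℕ) : Matrix n n R := (A ^ k)ᵀ * A ^ k

@[simp]
lemma gramPow_zero (A : Matrix n n R) : gramPow A 0 = 1 := by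
  simp [gramPow]

lemma gramPow_succ (A : Matrix n n R) (k : ℕ) : gramPow A (k + 1) = Aᵀ * gramPow A k * A := by
  simp only [gramPow, pow_succ, transpose_mul, Matrix.mul_assoc]

lemma eq_pow_smul_gramPow_add_smul_sum {c : R} {S : ℕ → Matrix n n R} (A : Matrix n n R)
    (hS0 : S 0 = 1) (hS : ∀ m, S (m + 1) = c • (Aᵀ * S m * A) + (1 - c) • 1) (m : ℕ) :
    S m = c ^ m • gramPow A m + (1 - c) • ∑ k ∈ Finset.range m, c ^ k • gramPow A k := by
  induction m with
  | zero => simp [hS0]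
  | succ m ih =>
    rw [hS, ih, Finset.sum_range_succ']
    simp only [Matrix.mul_add, Matrix.add_mul, Matrix.mul_smul, Matrix.smul_mul, Matrix.mul_sum,
      Matrix.sum_mul, ← gramPow_succ, gramPow_zero, smul_add, Finset.smul_sum, smul_smul, pow_succ,
      pow_zero, one_smul]
    simp only [mul_comm, mul_assoc]
    abel

end Matrix

theorem isFixedPt_of_tendsto_of_succ_eq {X : Type*} [TopologicalSpace X] [T2Space X] {F : X → X}
    (hF : Continuous F) {x : ℕ → X} (hx : ∀ m, x (m + 1) = F (x m)) {L : X}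
    (h : Tendsto x atTop (nhds L)) : Function.IsFixedPt F L :=
  tendsto_nhds_unique (by simpa only [hx, Function.comp_def] using (hF.tendsto L).comp h)
    ((tendsto_add_atTop_iff_nat 1).2 h)

theorem tendsto_pow_mul_add_mul_sum {c : ℝ} (hc0 : 0 ≤ c) (hc1 : c < 1) (a : ℝ) {g : ℕ → ℝ}
    (hg : ∀ k, |g k| ≤ 1) :
    Tendsto (fun m => c ^ m * g m + a * ∑ k ∈ Finset.range m, c ^ k * g k) atTop
      (nhds (a * ∑' k, c ^ k * g k)) := by
  have hnorm (k : ℕ) : ‖c ^ k * g k‖ ≤ c ^ k := by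
    simpa [abs_mul, abs_of_nonneg hc0] using mul_le_mul_of_nonneg_left (hg k) (pow_nonneg hc0 k)
  have hsum : Summable (fun k => c ^ k * g k) :=
    (summable_geometric_of_lt_one hc0 hc1).of_norm_bounded hnorm
  have hzero : Tendsto (fun m => c ^ m * g m) atTop (nhds 0) :=
    squeeze_zero_norm hnorm (tendsto_pow_atTop_nhds_zero_of_lt_one hc0 hc1)
  simpa using hzero.add (hsum.hasSum.tendsto_sum_nat.const_mul a)

/-- entrywise convergence of the iterative SimRank matrices.
If `S 0 = I`, `S (m+1) = c • Aᵀ S m A + (1-c) • I`, and every entry of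
`(Aᵏ)ᵀ Aᵏ` is bounded by `1` (e.g. for a column-substochastic `A`), then
`S n` converges entrywise to a matrix `S` satisfying
`S = c • Aᵀ S A + (1-c) • I`. -/
theorem simrank_converges {d : ℕ} (A : Matrix (Fin d) (Fin d) ℝ)
    (c : ℝ) (hc0 : 0 < c) (hc1 : c < 1)
    (hbound : ∀ (k : ℕ) (i j : Fin d), |((A ^ k)ᵀ * A ^ k) i j| ≤ 1)
    (S : ℕ → Matrix (Fin d) (Fin d) ℝ)
    (hS0 : S 0 = 1)
    (hSrec : ∀ m, S (m + 1) = c • (Aᵀ * S m * A) + (1 - c) • 1) :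
    ∃ L : Matrix (Fin d) (Fin d) ℝ,
      (∀ i j : Fin d, Tendsto (fun n => S n i j) atTop (nhds (L i j))) ∧
      L = c • (Aᵀ * L * A) + (1 - c) • 1 := by
  let L : Matrix (Fin d) (Fin d) ℝ := of fun i j => (1 - c) * ∑' k, c ^ k * gramPow A k i j
  have hconv (i j : Fin d) : Tendsto (fun n => S n i j) atTop (nhds (L i j)) := by
    simpa only [eq_pow_smul_gramPow_add_smul_sum A hS0 hSrec, Matrix.add_apply,
      Matrix.smul_apply, Matrix.sum_apply, smul_eq_mul, L, of_apply] using
      tendsto_pow_mul_add_mul_sum hc0.le hc1 (1 - c) (g := fun k => gramPow A k i j) (hbound · i j)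
  have hlim : Tendsto S atTop (nhds L) :=
    tendsto_pi_nhds.2 fun i => tendsto_pi_nhds.2 (hconv i)
  have hfix : Function.IsFixedPt (fun M => c • (Aᵀ * M * A) + (1 - c) • 1) L :=
    isFixedPt_of_tendsto_of_succ_eq (by fun_prop) hSrec hlim
  exact ⟨L, hconv, hfix.symm⟩
end

section
/- For the n-th SimRank similarity on an uncertain graph, |s_𝒢^(n)(u, v) − s_𝒢(u, v)| ≤ c^{n+1} for all n ≥ 1, where s_𝒢(u,v) = lim_{m→∞} s_𝒢^(m)(u,v). -/
open Filter

/-!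
Split `s^(N) - s^(n)`, for `n < N`, as `T - c^(n+1) m^(n)` with
`T = c^N m^(N) + (1-c) Σ_{n<k<N} c^k m^(k)`. The weights of `T` sum to `c^(n+1)`, so both `T` and
`c^(n+1) m^(n)` lie in `[0, c^(n+1)]` and differ by at most `c^(n+1)`; the bound passes
to the limit `N → ∞`.
-/

/-- `simrankTail c m 0 N` is `s^(N)`; starting the sum at `n` leaves total weight `c^n`. -/
def simrankTail (c : ℝ) (m : ℕ → ℝ) (n N : ℕ) : ℝ :=
  c ^ N * m N + (1 - c) * ∑ k ∈ Finset.Ico n N, c ^ k * m k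

section

variable {c : ℝ} {m : ℕ → ℝ}

theorem simrankTail_self (c : ℝ) (m : ℕ → ℝ) (n : ℕ) : simrankTail c m n n = c ^ n * m n := by
  simp [simrankTail]

theorem simrankTail_eq_sum_Ico_add (c : ℝ) (m : ℕ → ℝ) {n l N : ℕ} (hnl : n ≤ l) (hlN : l ≤ N) :
    simrankTail c m n N = (1 - c) * ∑ k ∈ Finset.Ico n l, c ^ k * m k + simrankTail c m l N := by
  simp only [simrankTail, ← Finset.sum_Ico_consecutive _ hnl hlN]
  ring

theorem simrankTail_one (c : ℝ) {n N : ℕ} (hnN : n ≤ N) : simrankTail c 1 n N = c ^ n := by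
  simp only [simrankTail, Pi.one_apply, mul_one]
  linear_combination geom_sum_Ico_mul_neg c hnN

theorem simrankTail_nonneg (hc0 : 0 ≤ c) (hc1 : c ≤ 1) (hm : ∀ k, 0 ≤ m k) (n N : ℕ) :
    0 ≤ simrankTail c m n N :=
  add_nonneg (mul_nonneg (pow_nonneg hc0 N) (hm N)) <| mul_nonneg (sub_nonneg.mpr hc1) <|
    Finset.sum_nonneg fun k _ ↦ mul_nonneg (pow_nonneg hc0 k) (hm k)

theorem simrankTail_mono (hc0 : 0 ≤ c) (hc1 : c ≤ 1) {m' : ℕ → ℝ} (hmm' : m ≤ m') (n N : ℕ) :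
    simrankTail c m n N ≤ simrankTail c m' n N := by
  unfold simrankTail
  have : 0 ≤ 1 - c := sub_nonneg.mpr hc1
  gcongr <;> exact hmm' _

theorem simrankTail_le_pow (hc0 : 0 ≤ c) (hc1 : c ≤ 1) (hm : ∀ k, m k ≤ 1) {n N : ℕ}
    (hnN : n ≤ N) : simrankTail c m n N ≤ c ^ n :=
  (simrankTail_mono hc0 hc1 hm n N).trans (simrankTail_one c hnN).le

theorem simrankTail_zero_sub (c : ℝ) (m : ℕ → ℝ) {n N : ℕ} (hnN : n < N) :
    simrankTail c m 0 N - simrankTail c m 0 n = simrankTail c m (n + 1) N - c ^ (n + 1) * m n := by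
  rw [simrankTail_eq_sum_Ico_add c m (Nat.zero_le (n + 1)) hnN,
    simrankTail_eq_sum_Ico_add c m (Nat.zero_le n) le_rfl, simrankTail_self,
    Finset.sum_Ico_succ_top (Nat.zero_le n)]
  ring

theorem abs_simrankTail_zero_sub_le (hc0 : 0 ≤ c) (hc1 : c ≤ 1) (hm : ∀ k, 0 ≤ m k ∧ m k ≤ 1)
    {n N : ℕ} (hnN : n < N) :
    |simrankTail c m 0 N - simrankTail c m 0 n| ≤ c ^ (n + 1) := by
  rw [simrankTail_zero_sub c m hnN]
  have hpow := pow_nonneg hc0 (n + 1)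
  exact abs_sub_le_of_nonneg_of_le (simrankTail_nonneg hc0 hc1 (fun k ↦ (hm k).1) _ _)
    (simrankTail_le_pow hc0 hc1 (fun k ↦ (hm k).2) hnN) (mul_nonneg hpow (hm n).1)
    (mul_le_of_le_one_right hpow (hm n).2)

end

/-- `|s^(n) − s| ≤ c^(n+1)` for all `n ≥ 1`, where
`s^(n) = c^n·m^(n) + (1−c)·Σ_{k<n} c^k·m^(k)` with meeting probabilities
`m^(k) ∈ [0,1]`, and `s` is the limit of `s^(n)`. -/
theorem simrank_partial_error_bound (c : ℝ) (hc0 : 0 < c) (hc1 : c < 1)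
    (m : ℕ → ℝ) (hm : ∀ k, 0 ≤ m k ∧ m k ≤ 1)
    (s : ℕ → ℝ)
    (hs : ∀ n, s n = c ^ n * m n + (1 - c) * ∑ k ∈ Finset.range n, c ^ k * m k)
    (L : ℝ) (hL : Tendsto s atTop (nhds L)) :
    ∀ n, 1 ≤ n → |s n - L| ≤ c ^ (n + 1) := by
  intro n _
  have hs_tail : s = simrankTail c m 0 := funext fun N ↦ by
    rw [hs, simrankTail, Finset.range_eq_Ico]
  have hclose : ∀ᶠ N in atTop, |s N - s n| ≤ c ^ (n + 1) :=
    (eventually_gt_atTop n).mono fun N hnN ↦ by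
      rw [hs_tail]
      exact abs_simrankTail_zero_sub_le hc0.le hc1.le hm hnN
  rw [abs_sub_comm]
  exact le_of_tendsto ((hL.sub_const (s n)).abs) hclose
end

section
/- (Propagated sampling error) Suppose for each k = 1, …, n, the estimate m̂^(k) satisfies |m^(k) − m̂^(k)| ≤ ε, with m̂^(0) = m^(0). Then the estimated SimRank ŝ^(n) = c^n·m̂^(n) + (1−c)·Σ_{k=0}^{n−1} c^k·m̂^(k) satisfies |s^(n) − ŝ^(n)| ≤ (c − c^n)·ε + c^n·ε, and in particular |s^(n) − ŝ^(n)| ≤ c·ε. -/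
/-!
The SimRank estimate is linear in the meeting probabilities, so the error is the same
expression evaluated at the errors `m^(k) - m̂^(k)`. These vanish at `k = 0`, so only the
geometric weights with `1 ≤ k` carry an error, and `(1 - c) * ∑_{k=1}^{n-1} c^k = c - c^n`.
-/

open Finset

section CommRing

variable {R : Type*} [CommRing R]

def truncatedSimRank (c : R) (n : ℕ) (x : ℕ → R) : R :=
  c ^ n * x n + (1 - c) * ∑ k ∈ range n, c ^ k * x k

theorem truncatedSimRank_sub (c : R) (n : ℕ) (x y : ℕ → R) :
    truncatedSimRank c n x - truncatedSimRank c n y = truncatedSimRank c n (x - y) := by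
  simp only [truncatedSimRank, Pi.sub_apply, mul_sub, sum_sub_distrib]
  ring

end CommRing

theorem sum_range_eq_sum_Ico_one {M : Type*} [AddCommMonoid M] {f : ℕ → M} (h0 : f 0 = 0)
    (n : ℕ) : ∑ k ∈ range n, f k = ∑ k ∈ Ico 1 n, f k := by
  refine (sum_subset (fun k hk => mem_range.2 (mem_Ico.1 hk).2) fun k hk hk' => ?_).symm
  obtain rfl : k = 0 := by simp_all
  exact h0

section OrderedRing

variable {R : Type*} [CommRing R] [LinearOrder R] [IsStrictOrderedRing R]

theorem abs_sum_mul_le_sum_mul {ι : Type*} {s : Finset ι} {w f : ι → R} {ε : R}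
    (hw : ∀ k ∈ s, 0 ≤ w k) (hf : ∀ k ∈ s, |f k| ≤ ε) :
    |∑ k ∈ s, w k * f k| ≤ (∑ k ∈ s, w k) * ε := by
  rw [sum_mul]
  refine (abs_sum_le_sum_abs _ _).trans (sum_le_sum fun k hk => ?_)
  rw [abs_mul, abs_of_nonneg (hw k hk)]
  exact mul_le_mul_of_nonneg_left (hf k hk) (hw k hk)

theorem abs_truncatedSimRank_le {c ε : R} (hc0 : 0 ≤ c) (hc1 : c ≤ 1) {n : ℕ} (hn : 1 ≤ n)
    {x : ℕ → R} (h0 : x 0 = 0) (hx : ∀ k, 1 ≤ k → k ≤ n → |x k| ≤ ε) :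
    |truncatedSimRank c n x| ≤ (c - c ^ n) * ε + c ^ n * ε := by
  have hsum : |∑ k ∈ range n, c ^ k * x k| ≤ (∑ k ∈ Ico 1 n, c ^ k) * ε := by
    rw [sum_range_eq_sum_Ico_one (by simp [h0])]
    exact abs_sum_mul_le_sum_mul (fun k _ => pow_nonneg hc0 k)
      fun k hk => hx k (mem_Ico.1 hk).1 (mem_Ico.1 hk).2.le
  calc |truncatedSimRank c n x|
      ≤ |c ^ n * x n| + |(1 - c) * ∑ k ∈ range n, c ^ k * x k| := abs_add_le _ _
    _ ≤ c ^ n * ε + (1 - c) * ((∑ k ∈ Ico 1 n, c ^ k) * ε) := by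
      rw [abs_mul, abs_mul, abs_of_nonneg (pow_nonneg hc0 n), abs_of_nonneg (sub_nonneg.2 hc1)]
      gcongr
      exact hx n hn le_rfl
    _ = (c - c ^ n) * ε + c ^ n * ε := by
      linear_combination ε * geom_sum_Ico_mul_neg c hn

end OrderedRing

theorem sampling_error_propagation_general (c ε : ℝ) (hc0 : 0 < c) (hc1 : c < 1)
    (n : ℕ) (hn : 1 ≤ n)
    (m mh : ℕ → ℝ)
    (h0 : mh 0 = m 0)
    (herr : ∀ k, 1 ≤ k → k ≤ n → |m k - mh k| ≤ ε) :
    |(c ^ n * m n + (1 - c) * ∑ k ∈ Finset.range n, c ^ k * m k) -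
      (c ^ n * mh n + (1 - c) * ∑ k ∈ Finset.range n, c ^ k * mh k)|
      ≤ (c - c ^ n) * ε + c ^ n * ε ∧
    |(c ^ n * m n + (1 - c) * ∑ k ∈ Finset.range n, c ^ k * m k) -
      (c ^ n * mh n + (1 - c) * ∑ k ∈ Finset.range n, c ^ k * mh k)|
      ≤ c * ε := by
  have key : |truncatedSimRank c n m - truncatedSimRank c n mh| ≤ (c - c ^ n) * ε + c ^ n * ε := by
    rw [truncatedSimRank_sub]
    exact abs_truncatedSimRank_le hc0.le hc1.le hn (by simp [h0]) herr
  exact ⟨key, key.trans_eq (by ring)⟩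

/-- propagated sampling error: if `m̂^(0) = m^(0)` and
`|m^(k) − m̂^(k)| ≤ ε` for `1 ≤ k ≤ n`, then the estimated SimRank
`ŝ^(n)` satisfies `|s^(n) − ŝ^(n)| ≤ (c − c^n)·ε + c^n·ε`, and in
particular `|s^(n) − ŝ^(n)| ≤ c·ε`. -/
theorem sampling_error_propagation (c ε : ℝ) (hc0 : 0 < c) (hc1 : c < 1)
    (hε : 0 ≤ ε) (n : ℕ) (hn : 1 ≤ n)
    (m mh : ℕ → ℝ)
    (hm : ∀ k ≤ n, 0 ≤ m k ∧ m k ≤ 1)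
    (hmh : ∀ k ≤ n, 0 ≤ mh k ∧ mh k ≤ 1)
    (h0 : mh 0 = m 0)
    (herr : ∀ k, 1 ≤ k → k ≤ n → |m k - mh k| ≤ ε) :
    |(c ^ n * m n + (1 - c) * ∑ k ∈ Finset.range n, c ^ k * m k) -
      (c ^ n * mh n + (1 - c) * ∑ k ∈ Finset.range n, c ^ k * mh k)|
      ≤ (c - c ^ n) * ε + c ^ n * ε ∧
    |(c ^ n * m n + (1 - c) * ∑ k ∈ Finset.range n, c ^ k * m k) -
      (c ^ n * mh n + (1 - c) * ∑ k ∈ Finset.range n, c ^ k * mh k)|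
      ≤ c * ε :=
  sampling_error_propagation_general c ε hc0 hc1 n hn m mh h0 herr
end
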